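/- arXiv:1102.3285 — 7 statements merged into one kernel-verified Lean document; each statement's English description precedes it below -/
import Mathlib

section
/- If there exists a coherent sequence of finite paths π₀, π₁, ... over prefixes of an infinite word w in a finitely-branching automaton, then there exists an infinite run ρ over w that visits accepting states infinitely often (a fair path). Moreover, if all π_i start in an initial state, then ρ starts in an initial state. -/
/-- Number of accepting states among the first `j` states of the finite path `π`. -/
noncomputable def pcount {Q : Type*} (F : Set Q) (π : List Q) (j : ℕ) : ℕ :=
  Nat.card {i : ℕ // i < j ∧ ∃ q ∈ π[i]?, q ∈ F}

/-- Coherence of a sequence of finite paths. -/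
def Coherent {Q : Type*} (F : Set Q) (ps : ℕ → List Q) : Prop :=
  ∀ i, ∃ j h, ∀ k, h ≤ k → j < (ps k).length ∧ i ≤ pcount F (ps k) j

/-- A finite path over a prefix of the infinite word `w`. -/
def IsFinRun {Q A : Type*} (Δ : Q → A → Q → Prop) (w : ℕ → A) (π : List Q) : Prop :=
  ∀ i, (h : i + 1 < π.length) → Δ (π[i]'(Nat.lt_of_succ_lt h)) (w i) (π[i+1]'h)

open Filter

lemma pcount_le {Q : Type*} (F : Set Q) (π : List Q) (j : ℕ) : pcount F π j ≤ j := by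
  have h : Nat.card {i : ℕ // i < j ∧ ∃ q ∈ π[i]?, q ∈ F} ≤ Nat.card (Fin j) :=
    Nat.card_le_card_of_injective (fun x => ⟨x.1, x.2.1⟩)
      (fun a b hab => Subtype.ext (by simpa [Fin.mk.injEq] using hab))
  simpa [pcount, Nat.card_eq_fintype_card, Fintype.card_fin] using h

lemma exists_mid {Q : Type*} (F : Set Q) (π : List Q) (n j : ℕ)
    (h : n + 1 ≤ pcount F π j) : ∃ m, n ≤ m ∧ m < j ∧ ∃ q ∈ π[m]?, q ∈ F := by
  by_contra hc
  push_neg at hc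
  have key : ∀ x : {i : ℕ // i < j ∧ ∃ q ∈ π[i]?, q ∈ F}, x.1 < n := by
    rintro ⟨i, hi, q, hq, hqF⟩
    by_contra h'
    push_neg at h'
    exact hc i h' hi q hq hqF
  have hle : Nat.card {i : ℕ // i < j ∧ ∃ q ∈ π[i]?, q ∈ F} ≤ Nat.card (Fin n) :=
    Nat.card_le_card_of_injective (fun x => ⟨x.1, key x⟩)
      (fun a b hab => Subtype.ext (by simpa [Fin.mk.injEq] using hab))
  simp only [Nat.card_eq_fintype_card, Fintype.card_fin] at hle
  unfold pcount at h
  omega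

/-- If there is a coherent sequence of finite paths over prefixes of `w` in a
finitely-branching (finite-state) automaton, then there is a fair infinite run over `w`;
moreover, if all the finite paths are initial then the fair run can be chosen initial. -/
theorem stmt1 {Q A : Type*} [Finite Q] (Δ : Q → A → Q → Prop) (I F : Set Q) (w : ℕ → A)
    (ps : ℕ → List Q) (hpath : ∀ k, IsFinRun Δ w (ps k)) (hcoh : Coherent F ps) :
    ∃ ρ : ℕ → Q, (∀ i, Δ (ρ i) (w i) (ρ (i + 1))) ∧ (∀ n, ∃ m, n ≤ m ∧ ρ m ∈ F) ∧
      ((∀ k, ∃ q ∈ (ps k).head?, q ∈ I) → ρ 0 ∈ I) := by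
  classical
  let U : Ultrafilter ℕ := Ultrafilter.of Filter.cofinite
  have hU : (U : Filter ℕ) ≤ Filter.cofinite := Ultrafilter.of_le _
  have hIci : ∀ h : ℕ, Set.Ici h ∈ U := by
    intro h
    apply hU
    rw [Filter.mem_cofinite]
    simpa using Set.finite_Iio h
  have hlen : ∀ n, {k | n < (ps k).length} ∈ U := by
    intro n
    obtain ⟨j, h, hjh⟩ := hcoh (n + 1)
    have hnj : n < j := by
      have h1 := (hjh h le_rfl).2
      have h2 := pcount_le F (ps h) j
      omega
    exact Filter.mem_of_superset (hIci h) (fun k hk => lt_trans hnj (hjh k hk).1)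
  have hex : ∀ n : ℕ, ∃ q : Q, {k : ℕ | (ps k)[n]? = some q} ∈ U := by
    intro n
    by_contra h'
    push_neg at h'
    have hmem : {k | n < (ps k).length} ∩ ⋂ q : Q, {k : ℕ | (ps k)[n]? = some q}ᶜ ∈ U :=
      Filter.inter_mem (hlen n)
        ((Filter.iInter_mem).2 fun q => (Ultrafilter.compl_mem_iff_notMem).2 (h' q))
    obtain ⟨k, hk1, hk2⟩ := Ultrafilter.nonempty_of_mem hmem
    have := Set.mem_iInter.1 hk2 ((ps k)[n]'hk1)
    exact this (List.getElem?_eq_getElem hk1)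
  set ρ : ℕ → Q := fun n => Classical.choose (hex n) with hρ_def
  have hρ : ∀ n : ℕ, {k | (ps k)[n]? = some (ρ n)} ∈ U := fun n => Classical.choose_spec (hex n)
  refine ⟨ρ, ?_, ?_, ?_⟩
  · intro i
    obtain ⟨k, hk1, hk2⟩ := Ultrafilter.nonempty_of_mem (Filter.inter_mem (hρ i) (hρ (i + 1)))
    simp only [Set.mem_setOf_eq] at hk1 hk2
    obtain ⟨hlt2, he2⟩ := List.getElem?_eq_some_iff.1 hk2
    obtain ⟨hlt1, he1⟩ := List.getElem?_eq_some_iff.1 hk1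
    have := hpath k i hlt2
    rw [he1, he2] at this
    exact this
  · intro n
    obtain ⟨j, h, hjh⟩ := hcoh (n + 1)
    have hS : (Set.Ici h ∩ ⋂ m ∈ Set.Iio j, {k | (ps k)[m]? = some (ρ m)}) ∈ U :=
      Filter.inter_mem (hIci h)
        ((Filter.biInter_mem (Set.finite_Iio j)).2 fun m _ => hρ m)
    obtain ⟨k, hk1, hk2⟩ := Ultrafilter.nonempty_of_mem hS
    obtain ⟨m, hnm, hmj, q, hq, hqF⟩ := exists_mid F (ps k) n j (hjh k hk1).2
    have heq : (ps k)[m]? = some (ρ m) := Set.mem_iInter₂.1 hk2 m hmj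
    rw [heq] at hq
    obtain rfl := Option.mem_some_iff.1 hq
    exact ⟨m, hnm, hqF⟩
  · intro hI
    obtain ⟨k, hk⟩ := Ultrafilter.nonempty_of_mem (hρ 0)
    obtain ⟨q, hq, hqI⟩ := hI k
    rw [List.head?_eq_getElem?] at hq
    simp only [Set.mem_setOf_eq] at hk
    rw [hk] at hq
    obtain rfl := Option.mem_some_iff.1 hq
    exact hqI
end

section
/- In the run DAG G of a finite Büchi automaton over a fixed infinite word, every vertex has rank at most ω² under the transfinite ranking construction: define G₀ = G, G_{α+1} = G_α minus its dead ends, and for limit λ, G_λ = H_λ minus the vertices inert in H_λ, where H_α = ⋂_{β<α} G_β; then a vertex's rank is sup{α < ω² : vertex ∈ H_α}, and this sup is well defined (H_{ω²} contains a vertex iff that vertex lies on a fair path). -/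
open Ordinal in
/-- The transfinite sequence of DAGs: `G 0 = G0`, successor stages remove dead ends,
limit stages remove the vertices that are inert in `H λ = ⋂_{β<λ} G β`. -/
noncomputable def Gseq {V : Type*} (E : V → V → Prop) (acc : V → Prop) (G0 : Set V) :
    Ordinal → Set V := fun o =>
  Ordinal.limitRecOn o G0
    (fun _ Gα => {v ∈ Gα | ∃ u, E v u ∧ u ∈ Gα})
    (fun o _ ih =>
      {v | (∀ β (h : β < o), v ∈ ih β h) ∧
        ∃ u, Relation.ReflTransGen (fun x y => E x y ∧ ∀ β (h : β < o), y ∈ ih β h) v u ∧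
          acc u})

/-- `H α = ⋂_{β<α} G β`. -/
noncomputable def Hseq {V : Type*} (E : V → V → Prop) (acc : V → Prop) (G0 : Set V)
    (o : Ordinal) : Set V :=
  {v | ∀ β < o, v ∈ Gseq E acc G0 β}

/-- The rank of a vertex: `sup {α < ω² | v ∈ H α}`. -/
noncomputable def rankOf {V : Type*} (E : V → V → Prop) (acc : V → Prop) (G0 : Set V)
    (v : V) : Ordinal :=
  sSup {α | α < Ordinal.omega0 * Ordinal.omega0 ∧ v ∈ Hseq E acc G0 α}

/-- `floor α`: the largest limit ordinal (0 counting as a limit) strictly below `α`. -/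
noncomputable def ofloor (α : Ordinal) : Ordinal :=
  sSup {l : Ordinal | (l = 0 ∨ Order.IsSuccLimit l) ∧ l < α}

/-- Edges of the run DAG of an automaton over the word `w`. -/
def dagEdge {Q A : Type*} (Δ : Q → A → Q → Prop) (w : ℕ → A) :
    Q × ℕ → Q × ℕ → Prop := fun v u => u.2 = v.2 + 1 ∧ Δ v.1 (w v.2) u.1

/-- The run DAG from state `q0` over word `w`: all vertices reachable from `(q0, 0)`. -/
def runDag {Q A : Type*} (Δ : Q → A → Q → Prop) (w : ℕ → A) (q0 : Q) : Set (Q × ℕ) :=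
  {v | Relation.ReflTransGen (dagEdge Δ w) (q0, 0) v}

/-- A vertex of the run DAG is accepting iff its state component is accepting. -/
def dagAcc {Q : Type*} (F : Set Q) : Q × ℕ → Prop := fun v => v.1 ∈ F

/-!
Removing dead ends `ω` times leaves, by König's lemma, a graph without dead ends; in such a graph
an inert vertex has an inert successor, so the vertices removed as inert at the limit stage
`ω * (k + 1)` carry an infinite path. These removed sets are disjoint for different `k`, and an
infinite path meets every level from some point on, so a single level of the run DAG, which has at
most `|Q|` vertices, meets all of them; hence some stage `ω * (k + 1)` with `k ≤ |Q|` removes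
nothing. There every vertex has a successor and reaches an accepting vertex, and following the
nearest accepting vertex again and again gives a fair path. Conversely a fair path survives every
stage. The rank bound is immediate: the supremum ranges over ordinals below `ω²`.
-/

open Ordinal Relation Set

section Paths

variable {V : Type*}

def NoDeadEnds (r : V → V → Prop) (S : Set V) : Prop :=
  ∀ x ∈ S, ∃ y ∈ S, r x y

theorem NoDeadEnds.exists_path {r : V → V → Prop} {S : Set V} (h : NoDeadEnds r S) {v : V}
    (hv : v ∈ S) : ∃ ρ : ℕ → V, ρ 0 = v ∧ ∀ i, ρ i ∈ S ∧ r (ρ i) (ρ (i + 1)) := by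
  choose! f hfS hfr using h
  have hmem : ∀ i, f^[i] v ∈ S := fun i => MapsTo.iterate hfS i hv
  refine ⟨fun i => f^[i] v, rfl, fun i => ⟨hmem i, ?_⟩⟩
  simpa only [Function.iterate_succ_apply'] using hfr _ (hmem i)

theorem Set.Finite.inter_iInter_nonempty_of_antitone {I : Set V} (hI : I.Finite)
    {A : ℕ → Set V} (hA : Antitone A) (h : ∀ m, (I ∩ A m).Nonempty) :
    (I ∩ ⋂ m, A m).Nonempty := by
  by_contra hempty
  have hout : ∀ u ∈ I, ∃ m, u ∉ A m := fun u hu => by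
    by_contra! hin
    exact hempty ⟨u, hu, mem_iInter.2 hin⟩
  choose! f hf using hout
  obtain ⟨M, hM⟩ := (hI.image f).bddAbove
  obtain ⟨u, huI, huA⟩ := h M
  exact hf u huI (hA (hM (mem_image_of_mem f huI)) huA)

end Paths

section Pruning

variable {V : Type*} (E : V → V → Prop) (acc : V → Prop)

def pruneDeadEnds (S : Set V) : Set V :=
  {v ∈ S | ∃ u, E v u ∧ u ∈ S}

def removeInert (S : Set V) : Set V :=
  {v ∈ S | ∃ u, ReflTransGen (fun x y => E x y ∧ y ∈ S) v u ∧ acc u}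

def ReachesAccWithin (S : Set V) : ℕ → V → Prop
  | 0, x => acc x
  | m + 1, x => acc x ∨ ∃ y ∈ S, E x y ∧ ReachesAccWithin S m y

variable {E acc}

theorem antitone_iterate_pruneDeadEnds (S : Set V) :
    Antitone fun m => (pruneDeadEnds E)^[m] S :=
  antitone_nat_of_succ_le fun m => by
    rw [Function.iterate_succ_apply']
    exact sep_subset _ _

/-- König's lemma. -/
theorem noDeadEnds_iInter_iterate_pruneDeadEnds (hfin : ∀ v, {u | E v u}.Finite) (S : Set V) :
    NoDeadEnds E (⋂ m, (pruneDeadEnds E)^[m] S) := by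
  intro v hv
  have hsucc : ∀ m, ({u | E v u} ∩ (pruneDeadEnds E)^[m] S).Nonempty := fun m => by
    have hvm := mem_iInter.1 hv (m + 1)
    rw [Function.iterate_succ_apply'] at hvm
    obtain ⟨-, u, hvu, hu⟩ := hvm
    exact ⟨u, hvu, hu⟩
  obtain ⟨u, hvu, hu⟩ :=
    (hfin v).inter_iInter_nonempty_of_antitone (antitone_iterate_pruneDeadEnds S) hsucc
  exact ⟨u, hu, hvu⟩

theorem NoDeadEnds.diff_removeInert {S : Set V} (hS : NoDeadEnds E S) :
    NoDeadEnds E (S \ removeInert E acc S) := by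
  rintro x ⟨hxS, hx⟩
  obtain ⟨y, hyS, hxy⟩ := hS x hxS
  refine ⟨y, ⟨hyS, ?_⟩, hxy⟩
  rintro ⟨-, u, hyu, hu⟩
  exact hx ⟨hxS, u, hyu.head ⟨hxy, hyS⟩, hu⟩

theorem exists_reachesAccWithin_of_mem_removeInert {S : Set V} {x : V}
    (hx : x ∈ removeInert E acc S) :
    ∃ m, ReachesAccWithin E acc S m x := by
  obtain ⟨-, u, hxu, hu⟩ := hx
  induction hxu using ReflTransGen.head_induction_on with
  | refl => exact ⟨0, hu⟩
  | head hxy _ ih =>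
    obtain ⟨m, hm⟩ := ih
    exact ⟨m + 1, Or.inr ⟨_, hxy.2, hxy.1, hm⟩⟩

/-- Walk towards the nearest accepting vertex; the distance to it cannot drop forever. -/
theorem NoDeadEnds.exists_fair_path {S : Set V} (hS : NoDeadEnds E S)
    (hreach : S ⊆ removeInert E acc S) {v : V} (hv : v ∈ S) :
    ∃ ρ : ℕ → V, ρ 0 = v ∧ (∀ i, ρ i ∈ S ∧ E (ρ i) (ρ (i + 1))) ∧
      ∀ n, ∃ m, n ≤ m ∧ acc (ρ m) := by
  let d : V → ℕ := fun x => sInf {m | ReachesAccWithin E acc S m x}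
  have hstep : NoDeadEnds (fun x y => E x y ∧ (acc x ∨ d y < d x)) S := by
    intro x hx
    by_cases hacc : acc x
    · obtain ⟨y, hy, hxy⟩ := hS x hx
      exact ⟨y, hy, hxy, Or.inl hacc⟩
    have hd : ReachesAccWithin E acc S (d x) x :=
      Nat.sInf_mem (exists_reachesAccWithin_of_mem_removeInert (hreach hx))
    obtain ⟨m, hm⟩ : ∃ m, d x = m + 1 :=
      Nat.exists_eq_succ_of_ne_zero fun h0 => hacc (by rw [h0] at hd; exact hd)
    rw [hm] at hd
    obtain ⟨y, hy, hxy, hym⟩ := hd.resolve_left hacc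
    exact ⟨y, hy, hxy, Or.inr (hm ▸ Nat.lt_succ_of_le (Nat.sInf_le hym))⟩
  obtain ⟨ρ, hρ0, hρ⟩ := hstep.exists_path hv
  refine ⟨ρ, hρ0, fun i => ⟨(hρ i).1, (hρ i).2.1⟩, fun n => ?_⟩
  by_contra! hnone
  obtain ⟨j, hj⟩ := WellFounded.not_rel_apply_succ (r := (· < ·)) fun j => d (ρ (n + j))
  exact hj ((hρ (n + j)).2.2.resolve_left (hnone _ (Nat.le_add_right n j)))

end Pruning

section Stages

variable {V : Type*} {E : V → V → Prop} {acc : V → Prop} {G0 : Set V}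

theorem Gseq_zero : Gseq E acc G0 0 = G0 :=
  limitRecOn_zero ..

theorem Gseq_add_one (α : Ordinal) : Gseq E acc G0 (α + 1) = pruneDeadEnds E (Gseq E acc G0 α) := by
  rw [Gseq, limitRecOn_add_one]
  rfl

theorem Gseq_limit {o : Ordinal} (ho : Order.IsSuccLimit o) :
    Gseq E acc G0 o = removeInert E acc (Hseq E acc G0 o) := by
  rw [Gseq, limitRecOn_limit _ _ _ _ ho]
  rfl

theorem Gseq_antitone : Antitone (Gseq E acc G0) := by
  suffices h : ∀ α, ∀ β ≤ α, Gseq E acc G0 α ⊆ Gseq E acc G0 β from fun β α hβα => h α β hβα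
  intro α
  induction α using Ordinal.limitRecOn with
  | zero => intro β hβ; rw [nonpos_iff_eq_zero.1 hβ]
  | add_one α ih =>
    intro β hβ
    rcases hβ.eq_or_lt with rfl | hβα
    · exact Subset.rfl
    · rw [Gseq_add_one]
      exact (sep_subset _ _).trans (ih β (Order.lt_add_one_iff.1 hβα))
  | limit α hα _ =>
    intro β hβ
    rcases hβ.eq_or_lt with rfl | hβα
    · exact Subset.rfl
    · rw [Gseq_limit hα]
      exact fun v hv => hv.1 β hβα

theorem Gseq_subset_Hseq (o : Ordinal) : Gseq E acc G0 o ⊆ Hseq E acc G0 o :=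
  fun _ hv _ hβ => Gseq_antitone hβ.le hv

theorem Gseq_add_nat (β : Ordinal) (m : ℕ) :
    Gseq E acc G0 (β + m) = (pruneDeadEnds E)^[m] (Gseq E acc G0 β) := by
  induction m with
  | zero => simp
  | succ m ih => rw [Nat.cast_succ, ← add_assoc, Gseq_add_one, ih, Function.iterate_succ_apply']

theorem Hseq_add_omega0 (β : Ordinal) :
    Hseq E acc G0 (β + ω) = ⋂ m : ℕ, (pruneDeadEnds E)^[m] (Gseq E acc G0 β) := by
  ext v
  simp only [Hseq, mem_ofPred_eq, mem_iInter, ← Gseq_add_nat]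
  refine ⟨fun h m => h _ (add_lt_add_right (natCast_lt_omega0 m) β), fun h γ hγ => ?_⟩
  obtain ⟨d, hd, hγd⟩ := (lt_add_iff omega0_ne_zero).1 hγ
  obtain ⟨m, rfl⟩ := lt_omega0.1 hd
  exact Gseq_antitone hγd (h m)

theorem noDeadEnds_Hseq_add_omega0 (hfin : ∀ v, {u | E v u}.Finite) (β : Ordinal) :
    NoDeadEnds E (Hseq E acc G0 (β + ω)) := by
  rw [Hseq_add_omega0]
  exact noDeadEnds_iInter_iterate_pruneDeadEnds hfin _

theorem noDeadEnds_Hseq_diff_Gseq (hfin : ∀ v, {u | E v u}.Finite) (β : Ordinal) :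
    NoDeadEnds E (Hseq E acc G0 (β + ω) \ Gseq E acc G0 (β + ω)) := by
  rw [Gseq_limit (isSuccLimit_add β isSuccLimit_omega0)]
  exact (noDeadEnds_Hseq_add_omega0 hfin β).diff_removeInert

theorem exists_fair_path_of_Gseq_eq_Hseq (hfin : ∀ v, {u | E v u}.Finite) {β : Ordinal}
    (h : Gseq E acc G0 (β + ω) = Hseq E acc G0 (β + ω)) {v : V} (hv : v ∈ Gseq E acc G0 (β + ω)) :
    ∃ ρ : ℕ → V, ρ 0 = v ∧ (∀ i, ρ i ∈ Gseq E acc G0 (β + ω) ∧ E (ρ i) (ρ (i + 1))) ∧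
      ∀ n, ∃ m, n ≤ m ∧ acc (ρ m) := by
  have hfix : Gseq E acc G0 (β + ω) = removeInert E acc (Gseq E acc G0 (β + ω)) := by
    conv_lhs => rw [Gseq_limit (isSuccLimit_add β isSuccLimit_omega0), ← h]
  exact (h ▸ noDeadEnds_Hseq_add_omega0 hfin β).exists_fair_path hfix.subset hv

theorem mem_Gseq_of_fair_path {ρ : ℕ → V} (hG0 : ∀ i, ρ i ∈ G0) (hE : ∀ i, E (ρ i) (ρ (i + 1)))
    (hfair : ∀ n, ∃ m, n ≤ m ∧ acc (ρ m)) (α : Ordinal) (i : ℕ) : ρ i ∈ Gseq E acc G0 α := by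
  induction α using Ordinal.limitRecOn generalizing i with
  | zero => rw [Gseq_zero]; exact hG0 i
  | add_one α ih =>
    rw [Gseq_add_one]
    exact ⟨ih i, ρ (i + 1), hE i, ih (i + 1)⟩
  | limit α hα ih =>
    have hH : ∀ j, ρ j ∈ Hseq E acc G0 α := fun j β hβ => ih β hβ j
    rw [Gseq_limit hα]
    obtain ⟨m, him, hm⟩ := hfair i
    exact ⟨hH i, ρ m,
      Nat.rel_of_forall_rel_succ_of_le _ (fun j => .single ⟨hE j, hH (j + 1)⟩) him, hm⟩

end Stages

section Graded

universe u

variable {V : Type*} {E : V → V → Prop} {acc : V → Prop} {G0 : Set V} {lv : V → ℕ}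

theorem finite_setOf_rel_of_encard_level_le (hlv : ∀ x y, E x y → lv y = lv x + 1) {n : ℕ}
    (hwidth : ∀ l, {x | lv x = l}.encard ≤ n) (v : V) : {u | E v u}.Finite :=
  (finite_of_encard_le_coe (hwidth (lv v + 1))).subset fun u hu => hlv v u hu

theorem level_path_eq (hlv : ∀ x y, E x y → lv y = lv x + 1) {ρ : ℕ → V}
    (hρ : ∀ i, E (ρ i) (ρ (i + 1))) (i : ℕ) : lv (ρ i) = lv (ρ 0) + i := by
  induction i with
  | zero => rfl
  | succ i ih => rw [hlv _ _ (hρ i), ih, add_assoc]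

theorem omega0_mul_add_omega0_eq (k : ℕ) : ω * k + ω = ω * ↑(k + 1) := by
  rw [Nat.cast_succ, mul_add_one]

theorem strictMono_omega0_mul_add_omega0 : StrictMono fun k : ℕ => ω * k + ω := fun j k hjk => by
  simp only [omega0_mul_add_omega0_eq]
  exact (mul_lt_mul_iff_right₀ omega0_pos).2 (Nat.cast_lt.2 (Nat.succ_lt_succ hjk))

theorem omega0_mul_add_omega0_lt (k : ℕ) : ω * k + ω < ω * ω := by
  rw [omega0_mul_add_omega0_eq]
  exact (mul_lt_mul_iff_right₀ omega0_pos).2 (natCast_lt_omega0 _)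

theorem exists_Gseq_eq_Hseq (hlv : ∀ x y, E x y → lv y = lv x + 1) {n : ℕ}
    (hwidth : ∀ l, {x | lv x = l}.encard ≤ n) :
    ∃ k ≤ n, Gseq E acc G0 (omega0.{u} * k + ω) = Hseq E acc G0 (omega0.{u} * k + ω) := by
  let D : ℕ → Set V := fun k => Hseq E acc G0 (ω * k + ω) \ Gseq E acc G0 (ω * k + ω)
  by_contra! hne
  have hpath : ∀ k : Fin (n + 1), ∃ ρ : ℕ → V, ∀ i, ρ i ∈ D k ∧ E (ρ i) (ρ (i + 1)) := fun k => by
    obtain ⟨v, hv⟩ :=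
      exists_of_ssubset ((Gseq_subset_Hseq _).ssubset_of_ne (hne k k.is_le))
    obtain ⟨ρ, -, hρ⟩ :=
      (noDeadEnds_Hseq_diff_Gseq (finite_setOf_rel_of_encard_level_le hlv hwidth) _).exists_path hv
    exact ⟨ρ, hρ⟩
  choose ρ hρ using hpath
  let l := Finset.univ.sup fun k => lv (ρ k 0)
  let f : Fin (n + 1) → V := fun k => ρ k (l - lv (ρ k 0))
  have hfl : ∀ k, lv (f k) = l := fun k => by
    rw [level_path_eq hlv (fun i => (hρ k i).2),
      Nat.add_sub_cancel' (Finset.le_sup (f := fun k => lv (ρ k 0)) (Finset.mem_univ k))]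
  have hD : ∀ {j k : Fin (n + 1)}, j < k → f k ∉ D j := fun {j k} hjk hkj =>
    hkj.2 ((hρ k _).1.1 _ (strictMono_omega0_mul_add_omega0 hjk))
  have hf : f.Injective := fun j k hjk => by
    rcases lt_trichotomy j k with hlt | heq | hgt
    · exact absurd (hjk ▸ (hρ j _).1) (hD hlt)
    · exact heq
    · exact absurd (hjk ▸ (hρ k _).1) (hD hgt)
  have hcard := (hf.encard_range.trans (encard_le_encard (range_subset_iff.2 hfl))).trans (hwidth l)
  rw [ENat.card_eq_coe_natCard, Nat.card_fin, Nat.cast_le] at hcard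
  omega

end Graded

theorem encard_setOf_snd_eq_le {Q : Type*} [Finite Q] (l : ℕ) :
    {x : Q × ℕ | x.2 = l}.encard ≤ Nat.card Q := calc
  {x : Q × ℕ | x.2 = l}.encard = (range fun q => (q, l)).encard := by
    congr 1; ext ⟨q, m⟩; simp [eq_comm]
  _ ≤ ENat.card Q := by rw [← image_univ, ← encard_univ]; exact encard_image_le _ _
  _ = Nat.card Q := ENat.card_eq_coe_natCard Q

open Ordinal in
theorem stmt2_general {Q A : Type*} [Finite Q] (Δ : Q → A → Q → Prop) (w : ℕ → A)
    (F : Set Q) (q0 : Q) (v : Q × ℕ) :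
    rankOf (dagEdge Δ w) (dagAcc F) (runDag Δ w q0) v ≤ omega0 * omega0 ∧
    (v ∈ Hseq (dagEdge Δ w) (dagAcc F) (runDag Δ w q0) (omega0 * omega0) ↔
      ∃ ρ : ℕ → Q × ℕ, ρ 0 = v ∧
        (∀ i, ρ i ∈ runDag Δ w q0 ∧ dagEdge Δ w (ρ i) (ρ (i + 1))) ∧
        ∀ n, ∃ m, n ≤ m ∧ dagAcc F (ρ m)) := by
  refine ⟨csSup_le' fun α hα => hα.1.le, ?_⟩
  have hlv : ∀ x y, dagEdge Δ w x y → y.2 = x.2 + 1 := fun _ _ h => h.1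
  have hwidth := encard_setOf_snd_eq_le (Q := Q)
  obtain ⟨k, -, hk⟩ :=
    exists_Gseq_eq_Hseq (acc := dagAcc F) (G0 := runDag Δ w q0) hlv hwidth
  constructor
  · intro hv
    obtain ⟨ρ, hρ0, hρ, hfair⟩ := exists_fair_path_of_Gseq_eq_Hseq
      (finite_setOf_rel_of_encard_level_le hlv hwidth) hk (hv _ (omega0_mul_add_omega0_lt k))
    refine ⟨ρ, hρ0, fun i => ⟨?_, (hρ i).2⟩, hfair⟩
    simpa only [Gseq_zero] using Gseq_antitone zero_le (hρ i).1
  · rintro ⟨ρ, rfl, hρ, hfair⟩ β -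
    exact mem_Gseq_of_fair_path (fun i => (hρ i).1) (fun i => (hρ i).2) hfair β 0

open Ordinal in
/-- Every vertex of the run DAG has rank at most `ω²`; moreover a vertex belongs to
`H_{ω²}` iff it lies on a fair path of the run DAG. -/
theorem stmt2 {Q A : Type*} [Finite Q] (Δ : Q → A → Q → Prop) (w : ℕ → A)
    (F : Set Q) (q0 : Q) (v : Q × ℕ) (hv : v ∈ runDag Δ w q0) :
    rankOf (dagEdge Δ w) (dagAcc F) (runDag Δ w q0) v ≤ omega0 * omega0 ∧
    (v ∈ Hseq (dagEdge Δ w) (dagAcc F) (runDag Δ w q0) (omega0 * omega0) ↔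
      ∃ ρ : ℕ → Q × ℕ, ρ 0 = v ∧
        (∀ i, ρ i ∈ runDag Δ w q0 ∧ dagEdge Δ w (ρ i) (ρ (i + 1))) ∧
        ∀ n, ∃ m, n ≤ m ∧ dagAcc F (ρ m)) :=
  stmt2_general Δ w F q0 v
end

section
/- For any transitive relation R on the states of a Büchi automaton, R ∘ τ₀(R) ⊆ τ₀(R): if s̄ R s and s τ₀(R) q, then s̄ τ₀(R) q. Combined with reflexivity (R ⊆ τ₀(R)), this yields R ⊆ R ∘ τ₀(R) ⊆ τ₀(R) for any preorder R. -/
/-- One round of the `τ₀` game: Spoiler moves `q →^a q'`, Duplicator answers with a proxy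
`sh` with `R s sh`, a transition `sh →^a s'`, such that `q ∈ F → sh ∈ F`, and the game
continues from `(s', q')` (required to be in `X`). -/
def tau0Step {Q A : Type*} (Δ : Q → A → Q → Prop) (F : Set Q)
    (R X : Q → Q → Prop) : Q → Q → Prop := fun s q =>
  ∀ a q', Δ q a q' → ∃ sh s', R s sh ∧ Δ sh a s' ∧ (q ∈ F → sh ∈ F) ∧ X s' q'

/-- `τ₀(R)`: the greatest fixpoint of `tau0Step`, i.e. Duplicator wins the safety game. -/
def tau0 {Q A : Type*} (Δ : Q → A → Q → Prop) (F : Set Q) (R : Q → Q → Prop) :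
    Q → Q → Prop := fun s q =>
  ∃ X : Q → Q → Prop, (∀ s' q', X s' q' → tau0Step Δ F R X s' q') ∧ X s q

/-- One round of the `τ₁` game: Spoiler additionally jumps via `R` before moving. -/
def tau1Step {Q A : Type*} (Δ : Q → A → Q → Prop) (F : Set Q)
    (R X : Q → Q → Prop) : Q → Q → Prop := fun s p =>
  ∀ a ph p', R p ph → Δ ph a p' →
    ∃ sh s', R s sh ∧ Δ sh a s' ∧ (ph ∈ F → sh ∈ F) ∧ X s' p'

/-- `τ₁(R)`: the greatest fixpoint of `tau1Step`. -/
def tau1 {Q A : Type*} (Δ : Q → A → Q → Prop) (F : Set Q) (R : Q → Q → Prop) :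
    Q → Q → Prop := fun s p =>
  ∃ X : Q → Q → Prop, (∀ s' p', X s' p' → tau1Step Δ F R X s' p') ∧ X s p

/-- For any transitive `R`, `R ∘ τ₀(R) ⊆ τ₀(R)`; combined with reflexivity this yields
`R ⊆ R ∘ τ₀(R) ⊆ τ₀(R)` for any preorder `R`. -/
theorem stmt12 {Q A : Type*} (Δ : Q → A → Q → Prop) (F : Set Q)
    (R : Q → Q → Prop) (htrans : Transitive R) :
    (∀ sb s q, R sb s → tau0 Δ F R s q → tau0 Δ F R sb q) ∧
    (Reflexive R → ∀ s q, R s q →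
      (∃ t, R s t ∧ tau0 Δ F R t q) ∧ tau0 Δ F R s q) := by
  have main : ∀ sb s q, R sb s → tau0 Δ F R s q → tau0 Δ F R sb q := by
    rintro sb s q hR ⟨X, hX, hsq⟩
    refine ⟨fun u q => ∃ t, (R u t ∨ u = t) ∧ X t q, ?_, s, Or.inl hR, hsq⟩
    rintro u q ⟨t, hut, htq⟩ a q' hq'
    obtain ⟨sh, s', hts, hΔ, hF, hX'⟩ := hX t q htq a q' hq'
    rcases hut with h | rfl
    · exact ⟨sh, s', htrans h hts, hΔ, hF, s', Or.inr rfl, hX'⟩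
    · exact ⟨sh, s', hts, hΔ, hF, s', Or.inr rfl, hX'⟩
  refine ⟨main, fun hrefl s q hR => ?_⟩
  have base : tau0 Δ F R s q := by
    refine ⟨R, ?_, hR⟩
    intro u v huv a q' hq'
    exact ⟨v, q', huv, hq', fun h => h, hrefl q'⟩
  exact ⟨⟨s, hrefl s, base⟩, base⟩
end

section
/- For any reflexive R and any appealing fragment T of τ₀(R) (i.e., T ⊆ τ₀(R), T transitive, and T self-respecting in the sense that Duplicator's winning strategies in the τ₀(R)-game from T-related pairs can be chosen to keep successor pairs in T), one has τ₀(T) ⊆ τ₀(R). That is, iterating τ₀ on an appealing fragment yields no relation beyond τ₀(R). -/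
/-- For reflexive `R` and any appealing fragment `T` of `τ₀(R)` (transitive and
self-respecting, i.e. a post-fixpoint of the `τ₀(R)` game step), `τ₀(T) ⊆ τ₀(R)`. -/
theorem stmt13 {Q A : Type*} (Δ : Q → A → Q → Prop) (F : Set Q)
    (R T : Q → Q → Prop) (hR : Reflexive R)
    (hTtrans : Transitive T)
    (hTsr : ∀ s q, T s q → tau0Step Δ F R T s q) :
    ∀ s q, tau0 Δ F T s q → tau0 Δ F R s q := by
  have hunf : ∀ s q, tau0 Δ F T s q → tau0Step Δ F T (tau0 Δ F T) s q := by
    rintro s q ⟨X, hX, hsq⟩ a q' hq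
    obtain ⟨sh, s', h1, h2, h3, h4⟩ := hX s q hsq a q' hq
    exact ⟨sh, s', h1, h2, h3, X, hX, h4⟩
  intro s q h
  refine ⟨fun s q => tau0 Δ F T s q ∨ ∃ t, T s t ∧ tau0 Δ F T t q,
    ?_, Or.inl h⟩
  rintro s q (hsq | ⟨t, hst, htq⟩) a q' hq
  · obtain ⟨th, t', hT, hΔ, hF, ht'⟩ := hunf s q hsq a q' hq
    obtain ⟨u, u', hRu, hΔu, hFu, hTu⟩ := hTsr s th hT a t' hΔ
    exact ⟨u, u', hRu, hΔu, fun h => hFu (hF h), Or.inr ⟨t', hTu, ht'⟩⟩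
  · obtain ⟨th, t', hT, hΔ, hF, ht'⟩ := hunf t q htq a q' hq
    obtain ⟨u, u', hRu, hΔu, hFu, hTu⟩ := hTsr s th (hTtrans hst hT) a t' hΔ
    exact ⟨u, u', hRu, hΔu, fun h => hFu (hF h), Or.inr ⟨t', hTu, ht'⟩⟩
end

section
/- For any relation R on the states of a Büchi automaton, the relation τ₁(R) is transitive, where s τ₁(R) p iff Duplicator wins the game in which each round Spoiler picks a letter a, a proxy p̂ with p R p̂ and a transition p̂ →^a p', and Duplicator must pick ŝ with s R ŝ and ŝ →^a s' such that p̂ ∈ F ⟹ ŝ ∈ F, continuing from (s', p'). -/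
/-- For any relation `R`, the relation `τ₁(R)` is transitive. -/
theorem stmt14 {Q A : Type*} (Δ : Q → A → Q → Prop) (F : Set Q)
    (R : Q → Q → Prop) : Transitive (tau1 Δ F R) := by
  rintro s t p ⟨X₁, hX₁, hst⟩ ⟨X₂, hX₂, htp⟩
  refine ⟨fun s p => ∃ t, X₁ s t ∧ X₂ t p, ?_, t, hst, htp⟩
  rintro s p ⟨t, h1, h2⟩ a ph p' hRp hΔ
  obtain ⟨th, t', hRt, hΔt, hFt, h2'⟩ := hX₂ t p h2 a ph p' hRp hΔ
  obtain ⟨sh, s', hRs, hΔs, hFs, h1'⟩ := hX₁ s t h1 a th t' hRt hΔt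
  exact ⟨sh, s', hRs, hΔs, fun h => hFs (hFt h), t', h1', h2'⟩
end

section
/- Let R be any relation and T an appealing fragment of τ₀(R) (transitive and self-respecting). If R ⊆ T, then T ⊆ τ₁(R). In other words, every improving appealing fragment of τ₀(R) is contained in τ₁(R). -/
/-- Every improving appealing fragment `T` of `τ₀(R)` (transitive, self-respecting,
with `R ⊆ T`) is contained in `τ₁(R)`. -/
theorem stmt16 {Q A : Type*} (Δ : Q → A → Q → Prop) (F : Set Q)
    (R T : Q → Q → Prop)
    (hTtrans : Transitive T)
    (hTsr : ∀ s q, T s q → tau0Step Δ F R T s q)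
    (hRT : ∀ s q, R s q → T s q) :
    ∀ s q, T s q → tau1 Δ F R s q := by
  intro s q hT
  exact ⟨T, fun s' p' hT' a ph p' hR hD =>
    hTsr s' ph (hTtrans hT' (hRT _ _ hR)) a p' hD, hT⟩
end

section
/- The delayed variant τ₁^de(R) of the jumping transformer is transitive for any relation R: if r τ₁^de(R) q and q τ₁^de(R) p then r τ₁^de(R) p. -/
set_option linter.unusedSectionVars false
namespace St17

lemma ofFn_snoc {α : Type*} (f : ℕ → α) (n : ℕ) :
    (List.ofFn fun j : Fin (n+1) => f j) = (List.ofFn fun j : Fin n => f j) ++ [f n] := by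
  rw [List.ofFn_succ']
  simp [List.concat_eq_append, Fin.last]

lemma zip_ofFn {α β : Type*} : ∀ (n : ℕ) (f : ℕ → α) (g : ℕ → β),
    (List.ofFn fun j : Fin n => f j).zip (List.ofFn fun j : Fin n => g j) =
      List.ofFn fun j : Fin n => (f j, g j)
  | 0, f, g => by simp
  | (n+1), f, g => by
    simp only [List.ofFn_succ, List.zip_cons_cons, Fin.val_succ]
    rw [zip_ofFn n (fun m => f (m+1)) (fun m => g (m+1))]

lemma getLastD_ofFn_snoc {α : Type*} (f : ℕ → α) (n : ℕ) (d : α) :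
    (List.ofFn fun j : Fin (n+1) => f j).getLastD d = f n := by
  rw [ofFn_snoc, List.getLastD_concat]

variable {Q A : Type*}

/-- mid-game (Duplicator-of-ρ) answer: `(qh, q')`. -/
def dup2 (ρ : List (Q × Q) → A → Q → Q → Q × Q) (qs : List Q) (h : List (Q × Q))
    (x : A) (ph p' : Q) : Q × Q :=
  ρ (qs.zip (h.map Prod.snd)) x ph p'

/-- r-game (Duplicator-of-σ) answer: `(rh, r')`. -/
def dup1 (σ ρ : List (Q × Q) → A → Q → Q → Q × Q) (qs : List Q) (h : List (Q × Q))
    (x : A) (ph p' : Q) : Q × Q :=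
  σ ((h.map Prod.fst).zip qs) x (dup2 ρ qs h x ph p').1 (dup2 ρ qs h x ph p').2

/-- `v = (a, ph)` is a witness move reproducing the new configuration `c`. -/
def Wit (Δ : Q → A → Q → Prop) (R : Q → Q → Prop)
    (σ ρ : List (Q × Q) → A → Q → Q → Q × Q) (qs : List Q) (h : List (Q × Q))
    (c : Q × Q) (v : A × Q) : Prop :=
  R (h.getLastD c).2 v.2 ∧ Δ v.2 v.1 c.2 ∧ (dup1 σ ρ qs h v.1 v.2 c.2).2 = c.1

open scoped Classical in
/-- canonical witness choice: prefer `rh ∉ F`, then `ph ∈ F`. -/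
noncomputable def pick [Nonempty A] [Nonempty Q] (Δ : Q → A → Q → Prop) (F : Set Q)
    (R : Q → Q → Prop) (σ ρ : List (Q × Q) → A → Q → Q → Q × Q)
    (qs : List Q) (h : List (Q × Q)) (c : Q × Q) : A × Q :=
  if h1 : ∃ v, Wit Δ R σ ρ qs h c v ∧ (dup1 σ ρ qs h v.1 v.2 c.2).1 ∉ F ∧ v.2 ∈ F then
    h1.choose
  else if h2 : ∃ v, Wit Δ R σ ρ qs h c v ∧ (dup1 σ ρ qs h v.1 v.2 c.2).1 ∉ F then
    h2.choose
  else if h3 : ∃ v, Wit Δ R σ ρ qs h c v ∧ v.2 ∈ F then h3.choose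
  else if h4 : ∃ v, Wit Δ R σ ρ qs h c v then h4.choose
  else Classical.arbitrary _

section PickLemmas

variable [Nonempty A] [Nonempty Q] {Δ : Q → A → Q → Prop} {F : Set Q}
  {R : Q → Q → Prop} {σ ρ : List (Q × Q) → A → Q → Q → Q × Q}
  {qs : List Q} {h : List (Q × Q)} {c : Q × Q}

lemma pick_wit (hne : ∃ v, Wit Δ R σ ρ qs h c v) :
    Wit Δ R σ ρ qs h c (pick Δ F R σ ρ qs h c) := by
  unfold pick
  split_ifs with h1 h2 h3
  · exact h1.choose_spec.1
  · exact h2.choose_spec.1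
  · exact h3.choose_spec.1
  · exact hne.choose_spec

lemma pick_ph {v : A × Q} (hw : Wit Δ R σ ρ qs h c v) (hv : v.2 ∈ F)
    (hr : (dup1 σ ρ qs h v.1 v.2 c.2).1 ∉ F) :
    (pick Δ F R σ ρ qs h c).2 ∈ F := by
  have hex : ∃ v, Wit Δ R σ ρ qs h c v ∧ (dup1 σ ρ qs h v.1 v.2 c.2).1 ∉ F ∧ v.2 ∈ F :=
    ⟨v, hw, hr, hv⟩
  unfold pick
  rw [dif_pos hex]
  exact hex.choose_spec.2.2

lemma pick_rh {v : A × Q} (hw : Wit Δ R σ ρ qs h c v)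
    (hF : (dup1 σ ρ qs h (pick Δ F R σ ρ qs h c).1 (pick Δ F R σ ρ qs h c).2 c.2).1 ∈ F) :
    (dup1 σ ρ qs h v.1 v.2 c.2).1 ∈ F := by
  by_contra hr
  unfold pick at hF
  split_ifs at hF with h1 h2 h3 h4
  · exact h1.choose_spec.2.1 hF
  · exact h2.choose_spec.2 hF
  · exact h2 ⟨v, hw, hr⟩
  · exact h2 ⟨v, hw, hr⟩
  · exact h2 ⟨v, hw, hr⟩

end PickLemmas

/-- canonical mid-state reconstruction from a configuration history. -/
noncomputable def Emid [Nonempty A] [Nonempty Q] (Δ : Q → A → Q → Prop) (F : Set Q)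
    (R : Q → Q → Prop) (σ ρ : List (Q × Q) → A → Q → Q → Q × Q) (q0 : Q) :
    ℕ → List (Q × Q) → List Q
  | 0, _ => [q0]
  | (n+1), h =>
    let h' := h.dropLast
    let qs := Emid Δ F R σ ρ q0 n h'
    let c := h.getLastD (q0, q0)
    let v := pick Δ F R σ ρ qs h' c
    qs ++ [(dup2 ρ qs h' v.1 v.2 c.2).2]

/-- the composed strategy. -/
noncomputable def comp [Nonempty A] [Nonempty Q] (Δ : Q → A → Q → Prop) (F : Set Q)
    (R : Q → Q → Prop) (σ ρ : List (Q × Q) → A → Q → Q → Q × Q) (q0 : Q) :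
    List (Q × Q) → A → Q → Q → Q × Q :=
  fun h x ph p' => dup1 σ ρ (Emid Δ F R σ ρ q0 (h.length - 1) h) h x ph p'

section Canonical

variable [Nonempty A] [Nonempty Q]
variable (Δ : Q → A → Q → Prop) (F : Set Q) (R : Q → Q → Prop)
variable (σ ρ : List (Q × Q) → A → Q → Q → Q × Q) (q0 : Q) (cfg : ℕ → Q × Q)

def Hst (i : ℕ) : List (Q × Q) := List.ofFn (fun j : Fin (i+1) => cfg j)

lemma Hst_length (i : ℕ) : (Hst cfg i).length = i + 1 := by simp [Hst]

lemma Hst_succ (i : ℕ) : Hst cfg (i+1) = Hst cfg i ++ [cfg (i+1)] := ofFn_snoc cfg (i+1)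

lemma Hst_dropLast (i : ℕ) : (Hst cfg (i+1)).dropLast = Hst cfg i := by
  rw [Hst_succ, List.dropLast_concat]

lemma Hst_getLastD (i : ℕ) (d : Q × Q) : (Hst cfg i).getLastD d = cfg i :=
  getLastD_ofFn_snoc cfg i d

lemma Hsnd (i : ℕ) :
    (Hst cfg i).map Prod.snd = List.ofFn fun m : Fin (i+1) => (cfg m).2 := by
  rw [Hst, List.map_ofFn]; rfl

lemma Hfst (i : ℕ) :
    (Hst cfg i).map Prod.fst = List.ofFn fun m : Fin (i+1) => (cfg m).1 := by
  rw [Hst, List.map_ofFn]; rfl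

noncomputable def qsN (i : ℕ) : List Q := Emid Δ F R σ ρ q0 i (Hst cfg i)

noncomputable def wN (i : ℕ) : A × Q :=
  pick Δ F R σ ρ (qsN Δ F R σ ρ q0 cfg i) (Hst cfg i) (cfg (i+1))

noncomputable def qst (i : ℕ) : Q := (qsN Δ F R σ ρ q0 cfg i).getLastD q0

lemma qsN_zero : qsN Δ F R σ ρ q0 cfg 0 = [q0] := rfl

lemma qsN_succ (i : ℕ) :
    qsN Δ F R σ ρ q0 cfg (i+1) = qsN Δ F R σ ρ q0 cfg i ++
      [(dup2 ρ (qsN Δ F R σ ρ q0 cfg i) (Hst cfg i)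
          (wN Δ F R σ ρ q0 cfg i).1 (wN Δ F R σ ρ q0 cfg i).2 (cfg (i+1)).2).2] := by
  show Emid Δ F R σ ρ q0 (i+1) (Hst cfg (i+1)) = _
  rw [Emid]
  simp only [Hst_dropLast, Hst_getLastD]
  rfl

lemma qst_zero : qst Δ F R σ ρ q0 cfg 0 = q0 := rfl

lemma qst_succ (i : ℕ) :
    qst Δ F R σ ρ q0 cfg (i+1) = (dup2 ρ (qsN Δ F R σ ρ q0 cfg i) (Hst cfg i)
      (wN Δ F R σ ρ q0 cfg i).1 (wN Δ F R σ ρ q0 cfg i).2 (cfg (i+1)).2).2 := by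
  show (qsN Δ F R σ ρ q0 cfg (i+1)).getLastD q0 = _
  rw [qsN_succ, List.getLastD_concat]

lemma qsN_ofFn (i : ℕ) :
    qsN Δ F R σ ρ q0 cfg i = List.ofFn fun j : Fin (i+1) => qst Δ F R σ ρ q0 cfg j := by
  induction i with
  | zero => rw [qsN_zero]; simp [qst_zero]
  | succ i ih => rw [qsN_succ, ofFn_snoc, ← ih, qst_succ]

lemma mzip (i : ℕ) :
    (List.ofFn fun m : Fin (i+1) => (qst Δ F R σ ρ q0 cfg m, (cfg m).2)) =
      (qsN Δ F R σ ρ q0 cfg i).zip ((Hst cfg i).map Prod.snd) := by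
  rw [qsN_ofFn, Hsnd]
  exact (zip_ofFn (i+1) (qst Δ F R σ ρ q0 cfg) (fun n => (cfg n).2)).symm

lemma rzip (i : ℕ) :
    (List.ofFn fun m : Fin (i+1) => ((cfg m).1, qst Δ F R σ ρ q0 cfg m)) =
      ((Hst cfg i).map Prod.fst).zip (qsN Δ F R σ ρ q0 cfg i) := by
  rw [qsN_ofFn, Hfst]
  exact (zip_ofFn (i+1) (fun n => (cfg n).1) (qst Δ F R σ ρ q0 cfg)).symm

end Canonical

end St17



/-- `s τ₁^de(R) p`: Duplicator wins the delayed jumping game from `(s, p)`.  Each round,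
from configuration `(s, p)`, Spoiler picks a letter `a`, a proxy `ph` with `R p ph` and a
transition `ph →^a p'`; Duplicator's strategy `τ` (a function of the history and of
Spoiler's move) answers with a proxy `sh` with `R s sh` and a transition `sh →^a s'`, and
the play continues from `(s', p')`.  Winning condition (delayed): whenever Spoiler's proxy
is accepting at round `i`, Duplicator's proxy is accepting at some round `j ≥ i`. -/
def Tau1De {Q A : Type*} (Δ : Q → A → Q → Prop) (F : Set Q) (R : Q → Q → Prop)
    (s0 p0 : Q) : Prop :=
  ∃ τ : List (Q × Q) → A → Q → Q → Q × Q,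
    ∀ (cfg : ℕ → Q × Q) (a : ℕ → A) (ph : ℕ → Q),
      cfg 0 = (s0, p0) →
      (∀ i, R (cfg i).2 (ph i)) →
      (∀ i, Δ (ph i) (a i) (cfg (i + 1)).2) →
      (∀ i, (cfg (i + 1)).1 =
        (τ (List.ofFn fun j : Fin (i + 1) => cfg j) (a i) (ph i) (cfg (i + 1)).2).2) →
      ((∀ i, R (cfg i).1
            (τ (List.ofFn fun j : Fin (i + 1) => cfg j) (a i) (ph i) (cfg (i + 1)).2).1 ∧
          Δ (τ (List.ofFn fun j : Fin (i + 1) => cfg j) (a i) (ph i) (cfg (i + 1)).2).1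
            (a i) (cfg (i + 1)).1) ∧
        ∀ i, ph i ∈ F → ∃ j, i ≤ j ∧
          (τ (List.ofFn fun m : Fin (j + 1) => cfg m) (a j) (ph j) (cfg (j + 1)).2).1 ∈ F)

/-- The delayed jumping transformer `τ₁^de(R)` is transitive, for any relation `R`. -/
theorem stmt17 {Q A : Type*} (Δ : Q → A → Q → Prop) (F : Set Q)
    (R : Q → Q → Prop) :
    ∀ r q p, Tau1De Δ F R r q → Tau1De Δ F R q p → Tau1De Δ F R r p := by
  rintro r q p ⟨σ, Hσ⟩ ⟨ρ, Hρ⟩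
  by_cases hA : Nonempty A
  case neg =>
    refine ⟨fun _ _ _ p' => (p', p'), ?_⟩
    intro cfg a ph _ _ _ _
    exact absurd ⟨a 0⟩ hA
  haveI := hA
  haveI : Nonempty Q := ⟨q⟩
  refine ⟨St17.comp Δ F R σ ρ q, ?_⟩
  intro cfg a ph h0 hR hD hcons
  -- the composed strategy unfolded on histories
  have compEq : ∀ (k : ℕ) (x : A) (u v : Q),
      St17.comp Δ F R σ ρ q (St17.Hst cfg k) x u v =
        St17.dup1 σ ρ (St17.qsN Δ F R σ ρ q cfg k) (St17.Hst cfg k) x u v := by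
    intro k x u v
    unfold St17.comp
    rw [St17.Hst_length]
    rfl
  have hcons' : ∀ i, (cfg (i+1)).1 =
      (St17.dup1 σ ρ (St17.qsN Δ F R σ ρ q cfg i) (St17.Hst cfg i)
        (a i) (ph i) (cfg (i+1)).2).2 := by
    intro i
    rw [hcons i]
    exact congrArg Prod.snd (compEq i (a i) (ph i) (cfg (i+1)).2)
  -- actual moves are witnesses
  have hW : ∀ i, St17.Wit Δ R σ ρ (St17.qsN Δ F R σ ρ q cfg i) (St17.Hst cfg i)
      (cfg (i+1)) (a i, ph i) := by
    intro i
    refine ⟨?_, hD i, (hcons' i).symm⟩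
    rw [St17.Hst_getLastD]
    exact hR i
  have hWp : ∀ i, St17.Wit Δ R σ ρ (St17.qsN Δ F R σ ρ q cfg i) (St17.Hst cfg i)
      (cfg (i+1)) (St17.wN Δ F R σ ρ q cfg i) := fun i => St17.pick_wit ⟨_, hW i⟩
  have hWpR : ∀ i, R (cfg i).2 (St17.wN Δ F R σ ρ q cfg i).2 := by
    intro i
    have h1 := (hWp i).1
    rwa [St17.Hst_getLastD] at h1
  -- the canonical mid play
  obtain ⟨Gm1, Gm2⟩ := Hρ (fun n => (St17.qst Δ F R σ ρ q cfg n, (cfg n).2))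
    (fun n => (St17.wN Δ F R σ ρ q cfg n).1) (fun n => (St17.wN Δ F R σ ρ q cfg n).2)
    (by show (St17.qst Δ F R σ ρ q cfg 0, (cfg 0).2) = (q, p)
        rw [St17.qst_zero, h0])
    (fun i => hWpR i)
    (fun i => (hWp i).2.1)
    (by
      intro i
      show St17.qst Δ F R σ ρ q cfg (i+1) =
        (ρ (List.ofFn fun j : Fin (i+1) => (St17.qst Δ F R σ ρ q cfg j, (cfg j).2))
          (St17.wN Δ F R σ ρ q cfg i).1 (St17.wN Δ F R σ ρ q cfg i).2 (cfg (i+1)).2).2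
      rw [St17.mzip Δ F R σ ρ q cfg i]
      exact St17.qst_succ Δ F R σ ρ q cfg i)
  have Gm1' : ∀ i, R (St17.qst Δ F R σ ρ q cfg i)
      ((St17.dup2 ρ (St17.qsN Δ F R σ ρ q cfg i) (St17.Hst cfg i)
        (St17.wN Δ F R σ ρ q cfg i).1 (St17.wN Δ F R σ ρ q cfg i).2 (cfg (i+1)).2).1) ∧
      Δ ((St17.dup2 ρ (St17.qsN Δ F R σ ρ q cfg i) (St17.Hst cfg i)
        (St17.wN Δ F R σ ρ q cfg i).1 (St17.wN Δ F R σ ρ q cfg i).2 (cfg (i+1)).2).1)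
        ((St17.wN Δ F R σ ρ q cfg i).1) (St17.qst Δ F R σ ρ q cfg (i+1)) := by
    intro i
    have h1 := Gm1 i
    rw [St17.mzip Δ F R σ ρ q cfg i] at h1
    exact h1
  have Gm2' : ∀ i, (St17.wN Δ F R σ ρ q cfg i).2 ∈ F → ∃ j, i ≤ j ∧
      (St17.dup2 ρ (St17.qsN Δ F R σ ρ q cfg j) (St17.Hst cfg j)
        (St17.wN Δ F R σ ρ q cfg j).1 (St17.wN Δ F R σ ρ q cfg j).2 (cfg (j+1)).2).1 ∈ F := by
    intro i hi
    obtain ⟨j, hj, hf⟩ := Gm2 i hi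
    refine ⟨j, hj, ?_⟩
    rw [St17.mzip Δ F R σ ρ q cfg j] at hf
    exact hf
  -- the canonical r play
  obtain ⟨-, Gr2⟩ := Hσ (fun n => ((cfg n).1, St17.qst Δ F R σ ρ q cfg n))
    (fun n => (St17.wN Δ F R σ ρ q cfg n).1)
    (fun n => (St17.dup2 ρ (St17.qsN Δ F R σ ρ q cfg n) (St17.Hst cfg n)
      (St17.wN Δ F R σ ρ q cfg n).1 (St17.wN Δ F R σ ρ q cfg n).2 (cfg (n+1)).2).1)
    (by show ((cfg 0).1, St17.qst Δ F R σ ρ q cfg 0) = (r, q)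
        rw [St17.qst_zero, h0])
    (fun i => (Gm1' i).1)
    (fun i => (Gm1' i).2)
    (by
      intro i
      show (cfg (i+1)).1 =
        (σ (List.ofFn fun j : Fin (i+1) => ((cfg j).1, St17.qst Δ F R σ ρ q cfg j))
          (St17.wN Δ F R σ ρ q cfg i).1
          ((St17.dup2 ρ (St17.qsN Δ F R σ ρ q cfg i) (St17.Hst cfg i)
            (St17.wN Δ F R σ ρ q cfg i).1 (St17.wN Δ F R σ ρ q cfg i).2 (cfg (i+1)).2).1)
          (St17.qst Δ F R σ ρ q cfg (i+1))).2
      rw [St17.rzip Δ F R σ ρ q cfg i, St17.qst_succ Δ F R σ ρ q cfg i]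
      exact (hWp i).2.2.symm)
  have Gr2' : ∀ j, (St17.dup2 ρ (St17.qsN Δ F R σ ρ q cfg j) (St17.Hst cfg j)
      (St17.wN Δ F R σ ρ q cfg j).1 (St17.wN Δ F R σ ρ q cfg j).2 (cfg (j+1)).2).1 ∈ F →
      ∃ k, j ≤ k ∧ (St17.dup1 σ ρ (St17.qsN Δ F R σ ρ q cfg k) (St17.Hst cfg k)
        (St17.wN Δ F R σ ρ q cfg k).1 (St17.wN Δ F R σ ρ q cfg k).2 (cfg (k+1)).2).1 ∈ F := by
    intro j hj
    obtain ⟨k, hk, hf⟩ := Gr2 j hj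
    refine ⟨k, hk, ?_⟩
    rw [St17.rzip Δ F R σ ρ q cfg k, St17.qst_succ Δ F R σ ρ q cfg k] at hf
    exact hf
  constructor
  · -- round-by-round legality, via hybrid plays
    intro i
    obtain ⟨L, hL0, hLs⟩ :
        ∃ L : ℕ → List Q, L 0 = [q] ∧ ∀ j, L (j+1) = L j ++
          [if j < i then St17.qst Δ F R σ ρ q cfg (j+1)
           else (ρ ((L j).zip ((St17.Hst cfg j).map Prod.snd)) (a j) (ph j) (cfg (j+1)).2).2] :=
      ⟨fun n => Nat.rec [q] (fun j Lj => Lj ++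
          [if j < i then St17.qst Δ F R σ ρ q cfg (j+1)
           else (ρ (Lj.zip ((St17.Hst cfg j).map Prod.snd)) (a j) (ph j) (cfg (j+1)).2).2]) n,
       rfl, fun j => rfl⟩
    have mh0 : (L 0).getLastD q = q := by rw [hL0]; rfl
    have mhs : ∀ j, (L (j+1)).getLastD q =
        (if j < i then St17.qst Δ F R σ ρ q cfg (j+1)
         else (ρ ((L j).zip ((St17.Hst cfg j).map Prod.snd)) (a j) (ph j) (cfg (j+1)).2).2) := by
      intro j
      rw [hLs j, List.getLastD_concat]
    have Lof : ∀ n, L n = List.ofFn fun m : Fin (n+1) => (L m).getLastD q := by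
      intro n
      induction n with
      | zero => rw [St17.ofFn_snoc (fun m => (L m).getLastD q) 0]; simp [hL0]
      | succ n ih =>
        rw [St17.ofFn_snoc (fun m => (L m).getLastD q) (n+1), ← ih, hLs n,
          List.getLastD_concat]
    have Lqs : ∀ j, j ≤ i → L j = St17.qsN Δ F R σ ρ q cfg j := by
      intro j
      induction j with
      | zero => intro _; rw [hL0, St17.qsN_zero]
      | succ j ih =>
        intro hj
        have hji : j < i := Nat.lt_of_lt_of_le (Nat.lt_succ_self j) hj
        rw [hLs j, if_pos hji, ih (Nat.le_of_lt hji), St17.qst_succ, St17.qsN_succ]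
    have mhq : ∀ j, j ≤ i → (L j).getLastD q = St17.qst Δ F R σ ρ q cfg j := by
      intro j hj
      rw [Lqs j hj]
      rfl
    have hofn : ∀ j, (List.ofFn fun m : Fin (j+1) => ((L m).getLastD q, (cfg m).2)) =
        (L j).zip ((St17.Hst cfg j).map Prod.snd) := by
      intro j
      rw [Lof j, St17.Hsnd cfg j]
      exact (St17.zip_ofFn (j+1) (fun m => (L m).getLastD q) (fun m => (cfg m).2)).symm
    obtain ⟨Gh1, -⟩ := Hρ (fun n => ((L n).getLastD q, (cfg n).2))
      (fun j => if j < i then (St17.wN Δ F R σ ρ q cfg j).1 else a j)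
      (fun j => if j < i then (St17.wN Δ F R σ ρ q cfg j).2 else ph j)
      (by show ((L 0).getLastD q, (cfg 0).2) = (q, p)
          rw [mh0, h0])
      (by
        intro j
        show R (cfg j).2 _
        by_cases hj : j < i
        · simp only [if_pos hj]; exact hWpR j
        · simp only [if_neg hj]; exact hR j)
      (by
        intro j
        show Δ _ _ (cfg (j+1)).2
        by_cases hj : j < i
        · simp only [if_pos hj]; exact (hWp j).2.1
        · simp only [if_neg hj]; exact hD j)
      (by
        intro j
        show (L (j+1)).getLastD q =
          (ρ (List.ofFn fun m : Fin (j+1) => ((L m).getLastD q, (cfg m).2))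
            (if j < i then (St17.wN Δ F R σ ρ q cfg j).1 else a j)
            (if j < i then (St17.wN Δ F R σ ρ q cfg j).2 else ph j) (cfg (j+1)).2).2
        rw [hofn j, mhs j]
        by_cases hj : j < i
        · simp only [if_pos hj]
          rw [Lqs j (Nat.le_of_lt hj)]
          exact St17.qst_succ Δ F R σ ρ q cfg j
        · simp only [if_neg hj])
    have Gh1' : ∀ j, R ((L j).getLastD q)
        ((ρ ((L j).zip ((St17.Hst cfg j).map Prod.snd))
          (if j < i then (St17.wN Δ F R σ ρ q cfg j).1 else a j)
          (if j < i then (St17.wN Δ F R σ ρ q cfg j).2 else ph j) (cfg (j+1)).2).1) ∧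
        Δ ((ρ ((L j).zip ((St17.Hst cfg j).map Prod.snd))
          (if j < i then (St17.wN Δ F R σ ρ q cfg j).1 else a j)
          (if j < i then (St17.wN Δ F R σ ρ q cfg j).2 else ph j) (cfg (j+1)).2).1)
          (if j < i then (St17.wN Δ F R σ ρ q cfg j).1 else a j) ((L (j+1)).getLastD q) := by
      intro j
      have h1 := Gh1 j
      rw [hofn j] at h1
      exact h1
    -- hybrid r play
    obtain ⟨LR, hLR0, hLRs⟩ :
        ∃ LR : ℕ → List Q, LR 0 = [(cfg 0).1] ∧ ∀ j, LR (j+1) = LR j ++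
          [if j ≤ i then (cfg (j+1)).1
           else (σ ((LR j).zip (L j))
              (if j < i then (St17.wN Δ F R σ ρ q cfg j).1 else a j)
              ((ρ ((L j).zip ((St17.Hst cfg j).map Prod.snd))
                (if j < i then (St17.wN Δ F R σ ρ q cfg j).1 else a j)
                (if j < i then (St17.wN Δ F R σ ρ q cfg j).2 else ph j) (cfg (j+1)).2).1)
              ((L (j+1)).getLastD q)).2] :=
      ⟨fun n => Nat.rec [(cfg 0).1] (fun j LRj => LRj ++
          [if j ≤ i then (cfg (j+1)).1
           else (σ (LRj.zip (L j))
              (if j < i then (St17.wN Δ F R σ ρ q cfg j).1 else a j)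
              ((ρ ((L j).zip ((St17.Hst cfg j).map Prod.snd))
                (if j < i then (St17.wN Δ F R σ ρ q cfg j).1 else a j)
                (if j < i then (St17.wN Δ F R σ ρ q cfg j).2 else ph j) (cfg (j+1)).2).1)
              ((L (j+1)).getLastD q)).2]) n,
       rfl, fun j => rfl⟩
    have rr0 : (LR 0).getLastD r = (cfg 0).1 := by rw [hLR0]; rfl
    have rrs : ∀ j, (LR (j+1)).getLastD r =
        (if j ≤ i then (cfg (j+1)).1
         else (σ ((LR j).zip (L j))
            (if j < i then (St17.wN Δ F R σ ρ q cfg j).1 else a j)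
            ((ρ ((L j).zip ((St17.Hst cfg j).map Prod.snd))
              (if j < i then (St17.wN Δ F R σ ρ q cfg j).1 else a j)
              (if j < i then (St17.wN Δ F R σ ρ q cfg j).2 else ph j) (cfg (j+1)).2).1)
            ((L (j+1)).getLastD q)).2) := by
      intro j
      rw [hLRs j, List.getLastD_concat]
    have rrc : ∀ j, j ≤ i + 1 → (LR j).getLastD r = (cfg j).1 := by
      intro j
      induction j with
      | zero => intro _; exact rr0
      | succ j ih =>
        intro hj
        rw [rrs j, if_pos (Nat.succ_le_succ_iff.mp hj)]
    have LRof : ∀ n, LR n = List.ofFn fun m : Fin (n+1) => (LR m).getLastD r := by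
      intro n
      induction n with
      | zero => rw [St17.ofFn_snoc (fun m => (LR m).getLastD r) 0]; simp [hLR0]
      | succ n ih =>
        rw [St17.ofFn_snoc (fun m => (LR m).getLastD r) (n+1), ← ih, hLRs n,
          List.getLastD_concat]
    have rofn : ∀ j, (List.ofFn fun m : Fin (j+1) => ((LR m).getLastD r, (L m).getLastD q)) =
        (LR j).zip (L j) := by
      intro j
      rw [LRof j, Lof j]
      exact (St17.zip_ofFn (j+1) (fun m => (LR m).getLastD r) (fun m => (L m).getLastD q)).symm
    have LRfst : ∀ j, j ≤ i → (LR j).zip (L j) =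
        ((St17.Hst cfg j).map Prod.fst).zip (St17.qsN Δ F R σ ρ q cfg j) := by
      intro j hj
      rw [Lqs j hj, St17.Hfst cfg j, LRof j]
      congr 1
      rw [show (fun m : Fin (j+1) => (LR m).getLastD r) = (fun m : Fin (j+1) => (cfg m).1)
        from funext fun m => rrc m (le_trans (Nat.lt_succ_iff.mp m.isLt)
          (le_trans hj (Nat.le_succ i)))]
    obtain ⟨Gg1, -⟩ := Hσ (fun n => ((LR n).getLastD r, (L n).getLastD q))
      (fun j => if j < i then (St17.wN Δ F R σ ρ q cfg j).1 else a j)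
      (fun j => (ρ ((L j).zip ((St17.Hst cfg j).map Prod.snd))
        (if j < i then (St17.wN Δ F R σ ρ q cfg j).1 else a j)
        (if j < i then (St17.wN Δ F R σ ρ q cfg j).2 else ph j) (cfg (j+1)).2).1)
      (by show ((LR 0).getLastD r, (L 0).getLastD q) = (r, q)
          rw [rr0, mh0, h0])
      (fun j => (Gh1' j).1)
      (fun j => (Gh1' j).2)
      (by
        intro j
        show (LR (j+1)).getLastD r =
          (σ (List.ofFn fun m : Fin (j+1) => ((LR m).getLastD r, (L m).getLastD q))
            (if j < i then (St17.wN Δ F R σ ρ q cfg j).1 else a j)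
            ((ρ ((L j).zip ((St17.Hst cfg j).map Prod.snd))
              (if j < i then (St17.wN Δ F R σ ρ q cfg j).1 else a j)
              (if j < i then (St17.wN Δ F R σ ρ q cfg j).2 else ph j) (cfg (j+1)).2).1)
            ((L (j+1)).getLastD q)).2
        rw [rofn j, rrs j]
        rcases Nat.lt_trichotomy j i with hj | hj | hj
        · simp only [if_pos (Nat.le_of_lt hj), if_pos hj]
          rw [LRfst j (Nat.le_of_lt hj), Lqs j (Nat.le_of_lt hj), mhq (j+1) hj,
            St17.qst_succ Δ F R σ ρ q cfg j]
          exact (hWp j).2.2.symm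
        · subst hj
          rw [mhs j]
          simp only [if_pos (le_refl j), if_neg (lt_irrefl j)]
          rw [LRfst j le_rfl, Lqs j le_rfl]
          exact hcons' j
        · simp only [if_neg (Nat.not_le.mpr hj), if_neg (Nat.lt_asymm hj)])
    have hgi := Gg1 i
    rw [rofn i, mhs i] at hgi
    simp only [if_neg (lt_irrefl i)] at hgi
    rw [LRfst i le_rfl, Lqs i le_rfl] at hgi
    rw [rrc i (Nat.le_succ i), rrc (i+1) le_rfl] at hgi
    constructor
    · show R (cfg i).1 (St17.comp Δ F R σ ρ q (St17.Hst cfg i) (a i) (ph i) (cfg (i+1)).2).1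
      rw [compEq i (a i) (ph i) (cfg (i+1)).2]
      exact hgi.1
    · show Δ (St17.comp Δ F R σ ρ q (St17.Hst cfg i) (a i) (ph i) (cfg (i+1)).2).1
        (a i) (cfg (i+1)).1
      rw [compEq i (a i) (ph i) (cfg (i+1)).2]
      exact hgi.2
  · -- the delayed winning condition
    intro i hFi
    by_cases hRH : (St17.comp Δ F R σ ρ q (St17.Hst cfg i) (a i) (ph i) (cfg (i+1)).2).1 ∈ F
    · exact ⟨i, le_rfl, hRH⟩
    · have hRH' : (St17.dup1 σ ρ (St17.qsN Δ F R σ ρ q cfg i) (St17.Hst cfg i)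
          (a i) (ph i) (cfg (i+1)).2).1 ∉ F := by
        rw [← compEq i (a i) (ph i) (cfg (i+1)).2]
        exact hRH
      have h1 : (St17.wN Δ F R σ ρ q cfg i).2 ∈ F := St17.pick_ph (hW i) hFi hRH'
      obtain ⟨j, hij, hjF⟩ := Gm2' i h1
      obtain ⟨k, hjk, hkF⟩ := Gr2' j hjF
      have hk : (St17.dup1 σ ρ (St17.qsN Δ F R σ ρ q cfg k) (St17.Hst cfg k)
          (a k) (ph k) (cfg (k+1)).2).1 ∈ F := St17.pick_rh (hW k) hkF
      refine ⟨k, le_trans hij hjk, ?_⟩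
      show (St17.comp Δ F R σ ρ q (St17.Hst cfg k) (a k) (ph k) (cfg (k+1)).2).1 ∈ F
      rw [compEq k (a k) (ph k) (cfg (k+1)).2]
      exact hk
end
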